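/- arXiv:math/0510051 — 2 statements merged into one kernel-verified Lean document; each statement's English description precedes it below -/
import Mathlib

section
/- Every caterpillar dag C has a track layout {V_i : i ∈ ℤ} such that for every arc (v,w) of C, if v ∈ V_i then w ∈ V_{i+1}. Consequently every caterpillar dag has an upward 3-track layout and an upward 1-queue layout. -/
/-!
Summing `±1` along the paths from a root gives a level function `f : V → ℤ` that rises by one
along every arc; a tree has no cycle to obstruct this. A spine vertex lies in the column given by
its distance from the start of the spine, and a leaf in the column of its unique spine neighbour.
Every edge then runs between consecutive spine vertices or from a spine vertex to a leaf of its
own column, so two edges whose ends interleave in the column order share a vertex. Sorting the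
vertices by (level, column) therefore gives a track layout without X-crossings whose vertex order
is topological. Reducing levels mod 3 keeps it crossing-free because edges only join consecutive
levels, and two nested arcs must join the same two levels, hence would cross.
-/

open Finset in
theorem Fintype.exists_injective_nat_lt_of_lt {V β : Type*} [Fintype V] [LinearOrder β]
    (k : V → β) : ∃ σ : V → ℕ, Function.Injective σ ∧ ∀ u v, k u < k v → σ u < σ v := by
  classical
  let e := Fintype.equivFin V
  let key : V → β ×ₗ ℕ := fun v => toLex (k v, (e v : ℕ))
  have hkey : Function.Injective key := fun u v h =>
    e.injective (Fin.ext (congrArg (fun p => (ofLex p).2) h))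
  have hrank : ∀ u v, key u < key v → #{z | key z < key u} < #{z | key z < key v} :=
    fun u v h => Finset.card_lt_card <| (Finset.ssubset_iff_of_subset fun z => by
      simpa using fun hz => hz.trans h).2 ⟨u, by simpa using h, by simp⟩
  refine ⟨fun v => #{z | key z < key v}, fun u v h => ?_, fun u v h =>
    hrank u v (Prod.Lex.toLex_lt_toLex.2 (.inl h))⟩
  rcases lt_trichotomy (key u) (key v) with h' | h' | h'
  · exact absurd h (hrank u v h').ne
  · exact hkey h'
  · exact absurd h (hrank v u h').ne'

namespace SimpleGraph

variable {V : Type*} {G : SimpleGraph V}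

lemma IsAcyclic.eq_concat_or_eq_concat (hG : G.IsAcyclic) {r u v : V} {p : G.Walk r u}
    {q : G.Walk r v} (hp : p.IsPath) (hq : q.IsPath) (h : G.Adj u v) :
    q = p.concat h ∨ p = q.concat h.symm := by
  by_cases hu : u ∈ q.support
  · exact .inl (hG.path_concat hp hq h hu)
  · exact .inr (hG.path_concat hq hp h.symm
      (hG.mem_support_of_ne_mem_support_of_adj_of_isPath hp hq h hu))

lemma IsTree.exists_potential {M : Type*} [AddCommGroup M] (hT : G.IsTree) (c : V → V → M)
    (hc : ∀ u v, G.Adj u v → c v u = -c u v) :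
    ∃ f : V → M, ∀ u v, G.Adj u v → f v = f u + c u v := by
  obtain ⟨r⟩ := hT.connected.nonempty
  choose p hp using hT.connected.exists_isPath r
  refine ⟨fun v => ((p v).darts.map fun d => c d.fst d.snd).sum, fun u v h => ?_⟩
  rcases hT.isAcyclic.eq_concat_or_eq_concat (hp u) (hp v) h with e | e
  · simp [e]
  · simp [e, hc u v h]

lemma IsTree.exists_level_of_orientation (hT : G.IsTree) (A : V → V → Prop)
    (hA : ∀ v w, A v w → G.Adj v w) (hA' : ∀ v w, G.Adj v w → (A v w ↔ ¬ A w v)) :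
    ∃ f : V → ℤ, (∀ v w, A v w → f w = f v + 1) ∧
      ∀ v w, G.Adj v w → f w = f v + 1 ∨ f v = f w + 1 := by
  classical
  obtain ⟨f, hf⟩ := hT.exists_potential (fun v w => if A v w then (1 : ℤ) else -1) fun v w h => by
    by_cases hvw : A v w
    · simp [hvw, (hA' v w h).1 hvw]
    · simp [hvw, (hA' w v h.symm).2 hvw]
  refine ⟨f, fun v w h => by simpa [h] using hf v w (hA v w h), fun v w h => ?_⟩
  have := hf v w h
  split_ifs at this <;> omega

lemma IsTree.length_eq_dist_of_isPath (hT : G.IsTree) {u v : V} {p : G.Walk u v}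
    (hp : p.IsPath) : p.length = G.dist u v := by
  obtain ⟨q, hq, hq_len⟩ := hT.connected.exists_path_of_dist u v
  rw [(hT.existsUnique_path u v).unique hp hq, hq_len]

def Walk.Dominates {a b : V} (P : G.Walk a b) : Prop :=
  ∀ v, v ∈ P.support ∨ ∃ w ∈ P.support, G.Adj v w

section Caterpillar

variable [DecidableEq V] {a b : V} {P : G.Walk a b}

lemma IsTree.eq_takeUntil_of_isPath (hT : G.IsTree) (hP : P.IsPath) {t : V}
    (ht : t ∈ P.support) {p : G.Walk a t} (hp : p.IsPath) : p = P.takeUntil t ht :=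
  (hT.existsUnique_path a t).unique hp (hP.takeUntil ht)

lemma IsTree.eq_concat_takeUntil_of_isPath (hT : G.IsTree) (hP : P.IsPath) {t x : V}
    (ht : t ∈ P.support) (hx : x ∉ P.support) (h : G.Adj t x) {p : G.Walk a x}
    (hp : p.IsPath) : p = (P.takeUntil t ht).concat h :=
  (hT.existsUnique_path a x).unique hp
    ((hP.takeUntil ht).concat (fun hx' => hx (P.support_takeUntil_subset_support ht hx')) h)

lemma IsTree.mem_support_or_eq_of_isPath (hT : G.IsTree) (hP : P.IsPath) (hdom : P.Dominates)
    {x y : V} {p : G.Walk a x} (hp : p.IsPath) (hy : y ∈ p.support) : y ∈ P.support ∨ y = x := by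
  by_cases hx : x ∈ P.support
  · rw [hT.eq_takeUntil_of_isPath hP hx hp] at hy
    exact .inl (P.support_takeUntil_subset_support hx hy)
  · obtain ⟨t, ht, hxt⟩ := (hdom x).resolve_left hx
    rw [hT.eq_concat_takeUntil_of_isPath hP ht hx hxt.symm hp, Walk.support_concat,
      List.mem_append, List.mem_singleton] at hy
    exact hy.imp_left (P.support_takeUntil_subset_support ht ·)

lemma IsTree.eq_of_adj_of_notMem_support (hT : G.IsTree) (hP : P.IsPath) (hdom : P.Dominates)
    {u v t : V} (hu : u ∉ P.support) (ht : t ∈ P.support) (hut : G.Adj u t) (huv : G.Adj u v) :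
    v = t := by
  obtain ⟨p, hp⟩ := hT.connected.exists_isPath a u
  obtain ⟨q, hq⟩ := hT.connected.exists_isPath a v
  rcases hT.isAcyclic.eq_concat_or_eq_concat hp hq huv with e | e
  · have hu_q : u ∈ q.support := by simp [e]
    rcases hT.mem_support_or_eq_of_isPath hP hdom hq hu_q with h | h
    · exact absurd h hu
    · exact absurd h huv.ne
  · have e' := e.symm.trans (hT.eq_concat_takeUntil_of_isPath hP ht hu hut.symm hp)
    exact (Walk.concat_inj e').1

lemma IsTree.eq_of_dist_eq_of_mem_support (hT : G.IsTree) (hP : P.IsPath) {t t' : V}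
    (ht : t ∈ P.support) (ht' : t' ∈ P.support) (h : G.dist a t = G.dist a t') : t = t' := by
  rw [← P.getVert_length_takeUntil ht, ← P.getVert_length_takeUntil ht',
    hT.length_eq_dist_of_isPath (hP.takeUntil ht),
    hT.length_eq_dist_of_isPath (hP.takeUntil ht'), h]

lemma IsTree.exists_anchor_of_dominates (hT : G.IsTree) (hP : P.IsPath) (hdom : P.Dominates) :
    ∃ s : V → V, (∀ v, s v ∈ P.support) ∧ ∀ u v, G.Adj u v → s u = u ∨ s u = v := by
  have hanchor : ∀ v, ∃ t ∈ P.support, (v ∈ P.support → t = v) ∧ (v ∉ P.support → G.Adj v t) := by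
    intro v
    by_cases hv : v ∈ P.support
    · exact ⟨v, hv, fun _ => rfl, fun h => absurd hv h⟩
    · obtain ⟨t, ht, hvt⟩ := (hdom v).resolve_left hv
      exact ⟨t, ht, fun h => absurd h hv, fun _ => hvt⟩
  choose s hs_mem hs_self hs_adj using hanchor
  refine ⟨s, hs_mem, fun u v huv => ?_⟩
  by_cases hu : u ∈ P.support
  · exact .inl (hs_self u hu)
  · exact .inr (hT.eq_of_adj_of_notMem_support hP hdom hu (hs_mem u) (hs_adj u hu) huv).symm

theorem IsTree.exists_column_of_dominates (hT : G.IsTree) (hP : P.IsPath) (hdom : P.Dominates) :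
    ∃ col : V → ℕ, ∀ v w x y, G.Adj v w → G.Adj x y → col v ≤ col x → col y ≤ col w →
      v = x ∨ v = y ∨ w = x ∨ w = y := by
  obtain ⟨s, hs_mem, hs_edge⟩ := hT.exists_anchor_of_dominates hP hdom
  refine ⟨fun v => G.dist a (s v), fun v w x y hvw hxy (hvx : G.dist a (s v) ≤ G.dist a (s x))
    (hyw : G.dist a (s y) ≤ G.dist a (s w)) => ?_⟩
  have hspan : ∀ u v, G.Adj u v → G.dist a (s u) ≤ G.dist a (s v) + 1 := by
    intro u v huv
    have := hT.dist_eq_dist_add_one_of_adj a huv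
    rcases hs_edge u v huv with hu | hu <;> rcases hs_edge v u huv.symm with hv | hv <;>
      rw [hu, hv] <;> omega
  have hcommon : ∀ u u', G.dist a (s u) = G.dist a (s u') → s u = s u' := fun u u' h =>
    hT.eq_of_dist_eq_of_mem_support hP (hs_mem u) (hs_mem u') h
  have := hspan v w hvw
  have := hspan w v hvw.symm
  have := hspan x y hxy
  have := hspan y x hxy.symm
  have := hs_edge v w hvw
  have := hs_edge w v hvw.symm
  have := hs_edge x y hxy
  have := hs_edge y x hxy.symm
  have hsame_col : G.dist a (s v) = G.dist a (s x) ∨ G.dist a (s v) = G.dist a (s y) ∨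
      G.dist a (s w) = G.dist a (s x) ∨ G.dist a (s w) = G.dist a (s y) := by omega
  rcases hsame_col with h | h | h | h <;> have := hcommon _ _ h <;> grind

theorem IsTree.exists_trackOrder_of_dominates [Fintype V] (hT : G.IsTree) (hP : P.IsPath)
    (hdom : P.Dominates) (f : V → ℤ) (hf : ∀ v w, G.Adj v w → f v ≠ f w) :
    ∃ σ : V → ℕ, Function.Injective σ ∧ (∀ u v, f u < f v → σ u < σ v) ∧
      ∀ v w x y, G.Adj v w → G.Adj x y → f v = f x → f w = f y → ¬ (σ v < σ x ∧ σ y < σ w) := by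
  obtain ⟨col, hcol⟩ := hT.exists_column_of_dominates hP hdom
  obtain ⟨σ, hσ, hσ_lt⟩ := Fintype.exists_injective_nat_lt_of_lt fun v => toLex (f v, col v)
  have hσ_le : ∀ u v, σ u < σ v → f u = f v → col u ≤ col v := fun u v h =>
    (Prod.Lex.toLex_le_toLex'.1 (not_lt.1 fun h' => (hσ_lt v u h').asymm h)).2
  refine ⟨σ, hσ, fun u v h => hσ_lt u v (Prod.Lex.toLex_lt_toLex.2 (.inl h)), ?_⟩
  rintro v w x y hvw hxy hvx hwy ⟨h1, h2⟩
  rcases hcol v w x y hvw hxy (hσ_le v x h1 hvx) (hσ_le y w h2 hwy.symm) with rfl | rfl | rfl | rfl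
  · exact h1.false
  · exact hf v w hvw hwy.symm
  · exact hf v w hvw hvx
  · exact h2.false

end Caterpillar

end SimpleGraph

open SimpleGraph

/-- Every caterpillar dag (acyclic orientation `A` of a caterpillar `G`, i.e. a
tree with a path such that every vertex is on it or adjacent to it) has a track
layout indexed by `ℤ` in which every arc has span exactly one; consequently it
has an upward 3-track layout and an upward 1-queue layout. -/
theorem caterpillar_dag_layouts {V : Type*} [Fintype V] (G : SimpleGraph V)
    (hT : G.IsTree)
    (hcat : ∃ (a b : V) (P : G.Walk a b), P.IsPath ∧
      ∀ v, v ∈ P.support ∨ ∃ w ∈ P.support, G.Adj v w)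
    (A : V → V → Prop)
    (hor : ∀ v w, A v w → G.Adj v w)
    (hor2 : ∀ v w, G.Adj v w → (A v w ↔ ¬ A w v)) :
    (∃ (f : V → ℤ) (g : V → ℕ),
      (∀ v w, G.Adj v w → f v ≠ f w) ∧
      (∀ v w, v ≠ w → f v = f w → g v ≠ g w) ∧
      (∀ v w x y, G.Adj v w → G.Adj x y → f v = f x → f w = f y →
        ¬ (g v < g x ∧ g y < g w)) ∧
      (∀ v w, A v w → f w = f v + 1)) ∧
    (∃ (f : V → Fin 3) (g : V → ℕ),
      (∀ v w, G.Adj v w → f v ≠ f w) ∧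
      (∀ v w, v ≠ w → f v = f w → g v ≠ g w) ∧
      (∀ v w x y, G.Adj v w → G.Adj x y → f v = f x → f w = f y →
        ¬ (g v < g x ∧ g y < g w)) ∧
      (∃ σ : V → ℕ, Function.Injective σ ∧ (∀ v w, A v w → σ v < σ w) ∧
        (∀ v w, f v = f w → g v < g w → σ v < σ w))) ∧
    (∃ σ : V → ℕ, Function.Injective σ ∧ (∀ v w, A v w → σ v < σ w) ∧
      ∀ v w x y, A v w → A x y → ¬ (σ v < σ x ∧ σ y < σ w)) := by
  classical
  obtain ⟨a, b, P, hP, hdom⟩ := hcat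
  obtain ⟨f, hf_arc, hspan⟩ := hT.exists_level_of_orientation A hor hor2
  have hf_adj : ∀ v w, G.Adj v w → f v ≠ f w := fun v w h => by
    rcases hspan v w h with e | e <;> omega
  obtain ⟨σ, hσ, hσ_lt, hcross⟩ := hT.exists_trackOrder_of_dominates hP hdom f hf_adj
  have hσ_le : ∀ u v, σ u < σ v → f u ≤ f v := fun u v h =>
    not_lt.1 fun h' => (hσ_lt v u h').asymm h
  have hup : ∀ v w, A v w → σ v < σ w := fun v w h => hσ_lt v w (by linarith [hf_arc v w h])
  refine ⟨⟨f, σ, hf_adj, fun v w hne _ => hσ.ne hne, hcross, hf_arc⟩,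
    ⟨fun v => ⟨(f v % 3).toNat, by omega⟩, σ, fun v w h hc => ?_, fun v w hne _ => hσ.ne hne,
      fun v w x y hvw hxy hvx hwy hσ' => ?_, σ, hσ, hup, fun _ _ _ => id⟩,
    ⟨σ, hσ, hup, fun v w x y hvw hxy hσ' => ?_⟩⟩
  · have : (f v % 3).toNat = (f w % 3).toNat := Fin.val_eq_of_eq hc
    have := hspan v w h
    omega
  · have : (f v % 3).toNat = (f x % 3).toNat := Fin.val_eq_of_eq hvx
    have : (f w % 3).toNat = (f y % 3).toNat := Fin.val_eq_of_eq hwy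
    have := hspan v w hvw
    have := hspan x y hxy
    have := hσ_le v x hσ'.1
    have := hσ_le y w hσ'.2
    exact hcross v w x y hvw hxy (by omega) (by omega) hσ'
  · have := hf_arc v w hvw
    have := hf_arc x y hxy
    have := hσ_le v x hσ'.1
    have := hσ_le y w hσ'.2
    exact hcross v w x y (hor v w hvw) (hor x y hxy) (by omega) (by omega) hσ'
end

section
/- Every c-colourable dag G on n vertices has an upward three-dimensional grid drawing of width c, depth less than 4c²n, and height at most 4cn; in particular the volume is O(c⁴n²). -/
/-- Embedding of integer grid points into real 3-space. -/
def toR3 (p : ℤ × ℤ × ℤ) : ℝ × ℝ × ℝ := ((p.1 : ℝ), (p.2.1 : ℝ), (p.2.2 : ℝ))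

/-!
Vertex `v` of colour `X` is placed at `(X, X Z, Z)` on the saddle `y = x z`, with height
`Z = p k(v) + (X² mod p)`, where `k` is a topological numbering and `p` a prime with
`c ≤ p < 4c`. An arc joins points with distinct `x` and distinct `z`, and the line through two
such saddle points meets the saddle only in them, so no vertex lies inside an arc. If two arcs
have endpoints of a common colour, the same computation in the plane of that colour shows that
they can only meet at a common endpoint. If the four colours are distinct, then modulo `p` the
endpoints lie on the moment curve `(x, x³, x²)`: the determinant of their homogeneous
coordinates is a nonzero Vandermonde determinant, so they are not coplanar and the arcs are
disjoint.
-/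

open Function Matrix Relation

section Numbering

variable {V : Type*} [Fintype V]

lemma exists_rank_of_injective {α : Type*} [LinearOrder α] {m : V → α} (hm : Injective m) :
    ∃ k : V → ℕ, Injective k ∧ (∀ v, k v < Fintype.card V) ∧ ∀ v w, m v < m w → k v < k w := by
  classical
  let e := (Finset.univ.image m).orderIsoOfFin (Finset.card_image_of_injective _ hm)
  have hmem : ∀ v, m v ∈ Finset.univ.image m := fun v =>
    Finset.mem_image_of_mem m (Finset.mem_univ v)
  refine ⟨fun v => e.symm ⟨m v, hmem v⟩, fun v w h => ?_, fun v => (e.symm _).isLt,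
    fun v w h => e.symm.strictMono h⟩
  exact hm (congrArg Subtype.val (e.symm.injective (Fin.ext h)))

lemma exists_topological_rank (A : V → V → Prop) (hacyc : ∀ v, ¬ TransGen A v v) :
    ∃ k : V → ℕ, Injective k ∧ (∀ v, k v < Fintype.card V) ∧ ∀ v w, A v w → k v < k w := by
  classical
  let ancestors : V → ℕ := fun v => (Finset.univ.filter fun u => TransGen A u v).card
  have hanc : ∀ v w, A v w → ancestors v < ancestors w := by
    refine fun v w h => Finset.card_lt_card ⟨fun u hu => ?_, fun hsub => ?_⟩
    · simp only [Finset.mem_filter, Finset.mem_univ, true_and] at hu ⊢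
      exact hu.tail h
    · exact hacyc v (by simpa using hsub (by simpa using TransGen.single h))
  let e := Fintype.equivFin V
  obtain ⟨k, hk, hkn, hmk⟩ := exists_rank_of_injective (m := fun v => toLex (ancestors v, e v))
    fun v w h => e.injective (Prod.ext_iff.mp (toLex.injective h)).2
  exact ⟨k, hk, hkn, fun v w h => hmk v w (Prod.Lex.toLex_lt_toLex.mpr (.inl (hanc v w h)))⟩

end Numbering

section Saddle

def saddlePoint (x z : ℝ) : ℝ × ℝ × ℝ := (x, x * z, z)

lemma smul_add_smul_saddlePoint (s t x₁ z₁ x₂ z₂ : ℝ) :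
    s • saddlePoint x₁ z₁ + t • saddlePoint x₂ z₂
      = (s * x₁ + t * x₂, s * (x₁ * z₁) + t * (x₂ * z₂), s * z₁ + t * z₂) := rfl

lemma eq_or_eq_of_saddlePoint_mem_segment {x z x₁ z₁ x₂ z₂ : ℝ} (hx : x₁ ≠ x₂) (hz : z₁ ≠ z₂)
    (h : saddlePoint x z ∈ segment ℝ (saddlePoint x₁ z₁) (saddlePoint x₂ z₂)) :
    z = z₁ ∨ z = z₂ := by
  obtain ⟨s, t, -, -, hst, h⟩ := h
  rw [smul_add_smul_saddlePoint, saddlePoint, Prod.mk.injEq, Prod.mk.injEq] at h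
  obtain ⟨hx', hy', hz'⟩ := h
  have hline : s * t * ((x₁ - x₂) * (z₁ - z₂)) = 0 := by
    linear_combination (s + t) * hy' - (s * z₁ + t * z₂) * hx' - x * hz' + x * z * hst
  rcases mul_eq_zero.mp hline with hst0 | hxz
  · rcases mul_eq_zero.mp hst0 with rfl | rfl
    · right; linear_combination -hz' + z₂ * hst
    · left; linear_combination -hz' + z₁ * hst
  · exact absurd hxz (mul_ne_zero (sub_ne_zero.mpr hx) (sub_ne_zero.mpr hz))

lemma eq_of_saddlePoint_segments_meet {x x₂ x₄ z₁ z₂ z₃ z₄ : ℝ} {q : ℝ × ℝ × ℝ} (hx : x₂ ≠ x)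
    (hq : q ≠ saddlePoint x z₁) (h₁ : q ∈ segment ℝ (saddlePoint x z₁) (saddlePoint x₂ z₂))
    (h₂ : q ∈ segment ℝ (saddlePoint x z₃) (saddlePoint x₄ z₄)) : z₂ = z₄ := by
  obtain ⟨a, b, -, -, hab, rfl⟩ := h₁
  obtain ⟨a', b', -, -, hab', h⟩ := h₂
  simp only [smul_add_smul_saddlePoint, Prod.mk.injEq] at h
  obtain ⟨ex, ey, ez⟩ := h
  have hb : b ≠ 0 := by
    rintro rfl
    obtain rfl : a = 1 := by linarith
    simp [saddlePoint] at hq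
  have key : b * (x₂ - x) * (z₂ - z₄) = 0 := by
    linear_combination -ey + x * ez + z₄ * ex - z₄ * x * hab' + z₄ * x * hab
  simpa [hb, sub_eq_zero, hx] using key

def saddleMatrix {R : Type*} [CommRing R] (x z : Fin 4 → R) : Matrix (Fin 4) (Fin 4) R :=
  Matrix.of fun i => ![1, x i, x i * z i, z i]

lemma RingHom.map_saddleMatrix {R S : Type*} [CommRing R] [CommRing S] (f : R →+* S)
    (x z : Fin 4 → R) : (saddleMatrix x z).map f = saddleMatrix (f ∘ x) (f ∘ z) := by
  ext i j
  fin_cases j <;> simp [saddleMatrix]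

lemma det_saddleMatrix_sq {R : Type*} [CommRing R] (x : Fin 4 → R) :
    (saddleMatrix x (x ^ 2)).det = -(vandermonde x).det := by
  have : saddleMatrix x (x ^ 2) = (vandermonde x).submatrix id (Equiv.swap 2 3) := by
    ext i j
    fin_cases j <;>
      simp [saddleMatrix, vandermonde, pow_succ, mul_assoc, Equiv.swap_apply_of_ne_of_ne]
  rw [this, det_permute', Equiv.Perm.sign_swap (by decide)]
  simp

lemma det_saddleMatrix_eq_zero_of_segments_meet {x z : Fin 4 → ℝ} {q : ℝ × ℝ × ℝ}
    (h₁ : q ∈ segment ℝ (saddlePoint (x 0) (z 0)) (saddlePoint (x 1) (z 1)))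
    (h₂ : q ∈ segment ℝ (saddlePoint (x 2) (z 2)) (saddlePoint (x 3) (z 3))) :
    (saddleMatrix x z).det = 0 := by
  obtain ⟨a, b, -, -, hab, rfl⟩ := h₁
  obtain ⟨a', b', -, -, hab', h⟩ := h₂
  simp only [smul_add_smul_saddlePoint, Prod.mk.injEq] at h
  obtain ⟨ex, ey, ez⟩ := h
  refine exists_vecMul_eq_zero_iff.mp ⟨![a, b, -a', -b'], fun h0 => ?_, ?_⟩
  · have ha : a = 0 := congrFun h0 0
    have hb : b = 0 := congrFun h0 1
    simp [ha, hb] at hab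
  · ext j
    fin_cases j <;> simp [saddleMatrix, vecMul, dotProduct, Fin.sum_univ_four] <;> linarith

lemma saddlePoint_segments_disjoint (p : ℕ) [Fact p.Prime] {x z : Fin 4 → ℕ}
    (hz : ∀ i, (z i : ZMod p) = (x i : ZMod p) ^ 2) (hx : Injective fun i => (x i : ZMod p)) :
    Disjoint (segment ℝ (saddlePoint (x 0) (z 0)) (saddlePoint (x 1) (z 1)))
      (segment ℝ (saddlePoint (x 2) (z 2)) (saddlePoint (x 3) (z 3))) := by
  rw [Set.disjoint_left]
  intro q h₁ h₂
  set M := saddleMatrix (fun i => (x i : ℤ)) (fun i => (z i : ℤ))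
  have hM : ∀ {R : Type} [CommRing R], (Int.castRingHom R M.det)
      = (saddleMatrix (fun i => (x i : R)) (fun i => (z i : R))).det := by
    intro R _
    rw [RingHom.map_det, RingHom.mapMatrix_apply, RingHom.map_saddleMatrix]
    simp only [comp_def, eq_intCast, Int.cast_natCast]
  have hreal : Int.castRingHom ℝ M.det = 0 := by
    rw [hM]
    exact det_saddleMatrix_eq_zero_of_segments_meet h₁ h₂
  have hmod : Int.castRingHom (ZMod p) M.det ≠ 0 := by
    have : (fun i => (z i : ZMod p)) = (fun i => (x i : ZMod p)) ^ 2 := funext hz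
    rw [hM, this, det_saddleMatrix_sq, neg_ne_zero]
    exact det_vandermonde_ne_zero_iff.mpr hx
  rw [eq_intCast, Int.cast_eq_zero] at hreal
  exact hmod (by rw [hreal, map_zero])

end Saddle

section Drawing

variable {V : Type*} {X Z : V → ℕ}

lemma eq_or_eq_of_saddlePoint_mem_segment_of_injective (hZ : Injective Z) {u v w : V}
    (hX : X v ≠ X w)
    (h : saddlePoint (X u) (Z u) ∈ segment ℝ (saddlePoint (X v) (Z v)) (saddlePoint (X w) (Z w))) :
    u = v ∨ u = w := by
  refine (eq_or_eq_of_saddlePoint_mem_segment (by exact_mod_cast hX)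
    (by exact_mod_cast hZ.ne (ne_of_apply_ne X hX)) h).imp (fun h => hZ ?_) (fun h => hZ ?_) <;>
    exact_mod_cast h

lemma eq_of_saddlePoint_segments_meet_of_injective (hZ : Injective Z) {a b c d : V}
    {q : ℝ × ℝ × ℝ} (hac : X a = X c) (hb : X b ≠ X a) (hq : q ≠ saddlePoint (X a) (Z a))
    (h₁ : q ∈ segment ℝ (saddlePoint (X a) (Z a)) (saddlePoint (X b) (Z b)))
    (h₂ : q ∈ segment ℝ (saddlePoint (X c) (Z c)) (saddlePoint (X d) (Z d))) : b = d := by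
  rw [← hac] at h₂
  exact hZ (by exact_mod_cast eq_of_saddlePoint_segments_meet (by exact_mod_cast hb) hq h₁ h₂)

variable (p : ℕ) [Fact p.Prime]

lemma eq_or_eq_of_mem_saddlePoint_segments (hZ : Injective Z)
    (hZp : ∀ v, (Z v : ZMod p) = (X v : ZMod p) ^ 2)
    (hXlt : ∀ v, X v < p) {v w x y : V} (hvw : X v ≠ X w) (hxy : X x ≠ X y)
    (hZvw : Z v < Z w) (hZxy : Z x < Z y) (hne : ¬(v = x ∧ w = y)) {q : ℝ × ℝ × ℝ}
    (h₁ : q ∈ segment ℝ (saddlePoint (X v) (Z v)) (saddlePoint (X w) (Z w)))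
    (h₂ : q ∈ segment ℝ (saddlePoint (X x) (Z x)) (saddlePoint (X y) (Z y))) :
    q = saddlePoint (X v) (Z v) ∨ q = saddlePoint (X w) (Z w) := by
  by_contra! ⟨hv, hw⟩
  have h₁' := h₁; have h₂' := h₂
  rw [segment_symm] at h₁' h₂'
  by_cases hvx : X v = X x
  · obtain rfl := eq_of_saddlePoint_segments_meet_of_injective hZ hvx (Ne.symm hvw) hv h₁ h₂
    obtain rfl := eq_of_saddlePoint_segments_meet_of_injective hZ rfl hvw hw h₁' h₂'
    exact hne ⟨rfl, rfl⟩
  by_cases hvy : X v = X y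
  · obtain rfl := eq_of_saddlePoint_segments_meet_of_injective hZ hvy (Ne.symm hvw) hv h₁ h₂'
    obtain rfl := eq_of_saddlePoint_segments_meet_of_injective hZ rfl hvw hw h₁' h₂
    exact lt_asymm hZvw hZxy
  by_cases hwx : X w = X x
  · obtain rfl := eq_of_saddlePoint_segments_meet_of_injective hZ hwx hvw hw h₁' h₂
    exact hvy rfl
  by_cases hwy : X w = X y
  · obtain rfl := eq_of_saddlePoint_segments_meet_of_injective hZ hwy hvw hw h₁' h₂'
    exact hvx rfl
  refine Set.disjoint_left.mp (saddlePoint_segments_disjoint p (x := ![X v, X w, X x, X y])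
    (z := ![Z v, Z w, Z x, Z y]) ?_ ?_) h₁ h₂
  · intro i; fin_cases i <;> exact hZp _
  · have hXinj : ∀ u w, (X u : ZMod p) = X w → X u = X w := fun u w h => by
      rw [← ZMod.val_cast_of_lt (hXlt u), h, ZMod.val_cast_of_lt (hXlt w)]
    intro i j h
    fin_cases i <;> fin_cases j <;> first
      | rfl | exact absurd (hXinj _ _ h) ‹_› | exact absurd (hXinj _ _ h).symm ‹_›

lemma exists_common_endpoint_of_mem_saddlePoint_segments (hZ : Injective Z)
    (hZp : ∀ v, (Z v : ZMod p) = (X v : ZMod p) ^ 2)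
    (hXlt : ∀ v, X v < p) {v w x y : V} (hvw : X v ≠ X w)
    (hxy : X x ≠ X y) (hZvw : Z v < Z w) (hZxy : Z x < Z y) (hne : ¬(v = x ∧ w = y))
    {q : ℝ × ℝ × ℝ} (h₁ : q ∈ segment ℝ (saddlePoint (X v) (Z v)) (saddlePoint (X w) (Z w)))
    (h₂ : q ∈ segment ℝ (saddlePoint (X x) (Z x)) (saddlePoint (X y) (Z y))) :
    ∃ u, (u = v ∨ u = w) ∧ (u = x ∨ u = y) ∧ q = saddlePoint (X u) (Z u) := by
  rcases eq_or_eq_of_mem_saddlePoint_segments p hZ hZp hXlt hvw hxy hZvw hZxy hne h₁ h₂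
    with rfl | rfl
  · exact ⟨v, .inl rfl, eq_or_eq_of_saddlePoint_mem_segment_of_injective hZ hxy h₂, rfl⟩
  · exact ⟨w, .inr rfl, eq_or_eq_of_saddlePoint_mem_segment_of_injective hZ hxy h₂, rfl⟩

end Drawing

section Construction

variable {V : Type*} (p : ℕ) (k X : V → ℕ)

def blockHeight (v : V) : ℕ := p * k v + X v ^ 2 % p

variable {p k X}

lemma blockHeight_lt_of_lt {n : ℕ} (hp : 0 < p) {v : V} (hv : k v < n) :
    blockHeight p k X v < n * p :=
  Nat.mul_add_lt_mul_of_lt_of_lt hv (Nat.mod_lt _ hp)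

lemma blockHeight_lt_blockHeight (hp : 0 < p) {v w : V} (h : k v < k w) :
    blockHeight p k X v < blockHeight p k X w :=
  (blockHeight_lt_of_lt hp h).trans_le ((mul_comm _ _).trans_le (Nat.le_add_right _ _))

lemma blockHeight_injective (hp : 0 < p) (hk : Injective k) : Injective (blockHeight p k X) := by
  intro v w h
  by_contra hvw
  rcases (hk.ne hvw).lt_or_gt with hlt | hlt
  · exact (blockHeight_lt_blockHeight hp hlt).ne h
  · exact (blockHeight_lt_blockHeight hp hlt).ne' h

lemma natCast_blockHeight (v : V) : (blockHeight p k X v : ZMod p) = (X v : ZMod p) ^ 2 := by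
  simp [blockHeight]

def saddlePos (X Z : V → ℕ) (v : V) : ℤ × ℤ × ℤ := (X v, X v * Z v, Z v)

lemma toR3_saddlePos (Z : V → ℕ) (v : V) : toR3 (saddlePos X Z v) = saddlePoint (X v) (Z v) := by
  simp [toR3, saddlePos, saddlePoint]

lemma saddlePos_injective {Z : V → ℕ} (hZ : Injective Z) : Injective (saddlePos X Z) :=
  fun v w h => hZ (by simpa [saddlePos] using congrArg (·.2.2) h)

end Construction

lemma exists_prime_le_lt_four_mul {c : ℕ} (hc : c ≠ 0) : ∃ p, p.Prime ∧ c ≤ p ∧ p < 4 * c := by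
  obtain ⟨p, hp, h₁, h₂⟩ := Nat.exists_prime_lt_and_le_two_mul (2 * c - 1) (by omega)
  exact ⟨p, hp, by omega, by omega⟩

/-- Every `c`-colourable dag on `n` vertices has an upward three-dimensional
grid drawing of width `c`, depth less than `4c²n` and height at most `4cn`
(hence volume `O(c⁴n²)`): vertices at distinct grid points, every arc strictly
increasing in z, segments pairwise non-crossing, and no segment passing through
a non-endpoint vertex. -/
theorem colourable_dag_upward_drawing {V : Type*} [Fintype V]
    (A : V → V → Prop) (hacyc : ∀ v, ¬ Relation.TransGen A v v)
    (c : ℕ) (f : V → Fin c) (hproper : ∀ v w, A v w → f v ≠ f w) :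
    ∃ pos : V → ℤ × ℤ × ℤ,
      Function.Injective pos ∧
      (∀ v w, A v w → (pos v).2.2 < (pos w).2.2) ∧
      (∀ v, 0 ≤ (pos v).1 ∧ (pos v).1 < c ∧
        0 ≤ (pos v).2.1 ∧ (pos v).2.1 < 4 * c ^ 2 * Fintype.card V ∧
        0 ≤ (pos v).2.2 ∧ (pos v).2.2 < 4 * c * Fintype.card V) ∧
      (∀ v w x y, A v w → A x y → ¬ (v = x ∧ w = y) →
        ∀ z ∈ segment ℝ (toR3 (pos v)) (toR3 (pos w)),
          z ∈ segment ℝ (toR3 (pos x)) (toR3 (pos y)) →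
          ∃ u, (u = v ∨ u = w) ∧ (u = x ∨ u = y) ∧ z = toR3 (pos u)) ∧
      (∀ v w u, A v w → u ≠ v → u ≠ w →
        toR3 (pos u) ∉ segment ℝ (toR3 (pos v)) (toR3 (pos w))) := by
  rcases isEmpty_or_nonempty V with _ | ⟨⟨v₀⟩⟩
  · exact ⟨isEmptyElim, fun v => isEmptyElim v, fun v => isEmptyElim v, fun v => isEmptyElim v,
      fun v => isEmptyElim v, fun v => isEmptyElim v⟩
  obtain ⟨p, hp, hcp, hp4⟩ := exists_prime_le_lt_four_mul (f v₀).pos.ne'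
  have : Fact p.Prime := ⟨hp⟩
  obtain ⟨k, hk, hkn, hA⟩ := exists_topological_rank A hacyc
  set X : V → ℕ := fun v => f v
  set Z := blockHeight p k X
  have hZ : Injective Z := blockHeight_injective hp.pos hk
  have hup : ∀ v w, A v w → Z v < Z w := fun v w h => blockHeight_lt_blockHeight hp.pos (hA v w h)
  have hXA : ∀ v w, A v w → X v ≠ X w := fun v w h hX => hproper v w h (Fin.ext hX)
  have hXlt : ∀ v, X v < p := fun v => (f v).isLt.trans_le hcp
  have hZn : ∀ v, Z v < 4 * c * Fintype.card V := fun v =>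
    (blockHeight_lt_of_lt hp.pos (hkn v)).trans_le (by nlinarith)
  have hXZ : ∀ v, X v * Z v < 4 * c ^ 2 * Fintype.card V := fun v =>
    (Nat.mul_lt_mul'' (f v).isLt (hZn v)).trans_eq (by ring)
  refine ⟨saddlePos X Z, saddlePos_injective hZ, fun v w h => ?_, fun v => ?_, ?_, ?_⟩
  · simpa [saddlePos] using hup v w h
  · simp only [saddlePos]
    exact ⟨by positivity, by exact_mod_cast (f v).isLt, by positivity, by exact_mod_cast hXZ v,
      by positivity, by exact_mod_cast hZn v⟩
  · intro v w x y hvw hxy hne q h₁ h₂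
    simp only [toR3_saddlePos] at h₁ h₂ ⊢
    exact exists_common_endpoint_of_mem_saddlePoint_segments p hZ natCast_blockHeight hXlt
      (hXA v w hvw) (hXA x y hxy) (hup v w hvw) (hup x y hxy) hne h₁ h₂
  · intro v w u hvw huv huw h
    simp only [toR3_saddlePos] at h
    exact (eq_or_eq_of_saddlePoint_mem_segment_of_injective hZ (hXA v w hvw) h).elim huv huw
end
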